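/- arXiv:1811.02428 — 3 statements merged into one kernel-verified Lean document; each statement's English description precedes it below -/
import Mathlib

section
/- Let σ: {1,...,n} → {1,...,n} be the partial successor function of a tuple i of nonzero integers (σ(k) = k⁺ when k⁺ ≤ n). If three indices k < k⁺ < k⁺⁺ all carry the same absolute value |i_k| = r, and there are indices with values whose absolute values are r-1 and r+1 interleaved as in the word u = ... s_{r+1} ... s_r ... s_{r-1} ... s_r ... s_r ... s_{r-1} ... s_{r+1} ..., where the gaps contain no letters from {s_{r-1}, s_r, s_{r+1}}, then u is not a reduced word: ℓ(u) is strictly less than the number of letters, because the middle segment s_r · (gap) · s_r collapses. -/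
private lemma stmt13_aux {B : Type*} {W : Type*} [Group W] {M : CoxeterMatrix B}
    (cs : CoxeterSystem M W) (r : B) (l : List B)
    (hc : ∀ j ∈ l, cs.simple r * cs.simple j = cs.simple j * cs.simple r) :
    cs.simple r * cs.wordProd l = cs.wordProd l * cs.simple r := by
  induction l with
  | nil => simp [cs.wordProd_nil]
  | cons a t ih =>
    rw [cs.wordProd_cons, ← mul_assoc, hc a (by simp), mul_assoc,
      ih (fun j hj => hc j (by simp [hj])), ← mul_assoc]

/-- If a word has the form
`u = (1st) s_{r+1} (2nd) s_r (3rd) s_{r-1} (4th) s_r (5th) s_r (6th) s_{r-1} (7th) s_{r+1} (8th)`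
where the fifth gap contains no letters from `{s_{r-1}, s_r, s_{r+1}}` — so every letter of
the fifth gap commutes with `s_r` (simply laced case) — then `u` is not reduced : its Coxeter
length is strictly smaller than its number of letters, because the segment `s_r (gap) s_r`
collapses. -/
theorem stmt_13 {B : Type*} {W : Type*} [Group W] {M : CoxeterMatrix B}
    (cs : CoxeterSystem M W) (r rp rm : B)
    (g₁ g₂ g₃ g₄ g₅ g₆ g₇ g₈ : List B)
    (hcomm : ∀ j ∈ g₅, (cs.simple r * cs.simple j) ^ 2 = 1)
    (u : List B)
    (hu : u = g₁ ++ [rp] ++ g₂ ++ [r] ++ g₃ ++ [rm] ++ g₄ ++ [r] ++ g₅ ++ [r] ++ g₆ ++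
      [rm] ++ g₇ ++ [rp] ++ g₈) :
    cs.length (cs.wordProd u) < u.length := by
  have hc : ∀ j ∈ g₅, cs.simple r * cs.simple j = cs.simple j * cs.simple r := by
    intro j hj
    have h := hcomm j hj
    have h2 : cs.simple r * cs.simple j = (cs.simple r * cs.simple j)⁻¹ := by
      rw [pow_two] at h
      exact (eq_inv_of_mul_eq_one_left h).symm ▸ (inv_eq_of_mul_eq_one_right h).symm
    rw [h2, mul_inv_rev, cs.inv_simple, cs.inv_simple]
  have hg := stmt13_aux cs r g₅ hc
  have key : ∀ X : W, cs.simple r * (cs.wordProd g₅ * (cs.simple r * X)) =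
      cs.wordProd g₅ * X := by
    intro X
    rw [← mul_assoc, hg, mul_assoc, ← mul_assoc (cs.simple r), cs.simple_mul_simple_self,
      one_mul]
  set u' : List B := g₁ ++ [rp] ++ g₂ ++ [r] ++ g₃ ++ [rm] ++ g₄ ++ g₅ ++ g₆ ++
      [rm] ++ g₇ ++ [rp] ++ g₈ with hu'
  have hp : cs.wordProd u = cs.wordProd u' := by
    rw [hu, hu']
    simp only [cs.wordProd_append, cs.wordProd_singleton, mul_assoc]
    rw [key]
  have hl : u'.length + 2 = u.length := by
    rw [hu, hu']; simp [List.length_append]; omega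
  calc cs.length (cs.wordProd u) = cs.length (cs.wordProd u') := by rw [hp]
    _ ≤ u'.length := cs.length_wordProd_le u'
    _ < u.length := by omega
end

section
/- Let i be a tuple of nonzero integers indexed by [-r,-1] ∪ [1,m] with i_{-c} = -c, and call an index k i-exchangeable if both k ≥ 1 and k⁺ ≤ m. Then for each absolute value c ∈ [1,r], the number of i-exchangeable indices k with |i_k| = c equals max(0, (number of indices l ∈ [1,m] with |i_l| = c) - 1). -/
/-- Counting exchangeable indices: for a tuple `i` of nonzero integers indexed by
`[-r,-1] ∪ [1,m]` with `i_{-c} = -c`, and the successor map `kp` (smallest later index in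
the index set with the same absolute value, else `m+1`), the number of `i`-exchangeable
indices `k` (those with `k ∈ [1,m]` and `k⁺ ∈ [1,m]`) of absolute value `c ∈ [1,r]` equals
`max(0, #{l ∈ [1,m] : |i_l| = c} − 1)` (truncated subtraction). -/
theorem stmt_16 (r m : ℕ) (i : ℤ → ℤ) (kp : ℤ → ℤ)
    (Iset : Finset ℤ) (hIset : Iset = Finset.Icc (-(r : ℤ)) (-1) ∪ Finset.Icc 1 (m : ℤ))
    (hnz : ∀ k ∈ Iset, i k ≠ 0)
    (hneg : ∀ c : ℤ, 1 ≤ c → c ≤ r → i (-c) = -c)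
    (hkp : ∀ k ∈ Iset,
      (kp k = m + 1 ∧ ∀ l ∈ Iset, k < l → (i l).natAbs ≠ (i k).natAbs) ∨
      (kp k ∈ Iset ∧ k < kp k ∧ (i (kp k)).natAbs = (i k).natAbs ∧
        ∀ l ∈ Iset, k < l → l < kp k → (i l).natAbs ≠ (i k).natAbs)) :
    ∀ c : ℕ, 1 ≤ c → c ≤ r →
      ((Finset.Icc 1 (m : ℤ)).filter fun k =>
          (i k).natAbs = c ∧ 1 ≤ kp k ∧ kp k ≤ m).card =
      ((Finset.Icc 1 (m : ℤ)).filter fun k => (i k).natAbs = c).card - 1 := by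
  intro c hc1 hcr
  set S := (Finset.Icc 1 (m : ℤ)).filter (fun k => (i k).natAbs = c) with hS
  set D := (Finset.Icc 1 (m : ℤ)).filter
    (fun k => (i k).natAbs = c ∧ 1 ≤ kp k ∧ kp k ≤ m) with hD
  have hDsub : D ⊆ S := by
    intro k hk
    simp only [hD, hS, Finset.mem_filter] at *
    exact ⟨hk.1, hk.2.1⟩
  have hmemIset : ∀ k : ℤ, k ∈ Finset.Icc 1 (m : ℤ) → k ∈ Iset := by
    intro k hk; rw [hIset]; exact Finset.mem_union_right _ hk
  have hIsetPos : ∀ k : ℤ, k ∈ Iset → 1 ≤ k → k ∈ Finset.Icc 1 (m : ℤ) := by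
    intro k hk h1
    rw [hIset] at hk
    rcases Finset.mem_union.1 hk with h | h
    · have := (Finset.mem_Icc.1 h).2; omega
    · exact h
  have hSmem : ∀ k ∈ S, k ∈ Finset.Icc 1 (m : ℤ) ∧ (i k).natAbs = c := by
    intro k hk; simpa [hS, Finset.mem_filter] using hk
  have hDmem : ∀ k ∈ D, k ∈ Finset.Icc 1 (m : ℤ) ∧ (i k).natAbs = c ∧
      1 ≤ kp k ∧ kp k ≤ m := by
    intro k hk
    simp only [hD, Finset.mem_filter] at hk
    exact ⟨hk.1, hk.2⟩
  by_cases hSne : S.Nonempty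
  · set a := S.min' hSne with ha
    have hkpS : ∀ k ∈ D, kp k ∈ S ∧ k < kp k ∧
        (∀ l ∈ Iset, k < l → l < kp k → (i l).natAbs ≠ (i k).natAbs) := by
      intro k hk
      obtain ⟨hkm, habs, h1, h2⟩ := hDmem k hk
      rcases hkp k (hmemIset k hkm) with ⟨heq, _⟩ | ⟨hmem, hlt, habs2, hmin⟩
      · omega
      · refine ⟨?_, hlt, hmin⟩
        simp only [hS, Finset.mem_filter]
        exact ⟨Finset.mem_Icc.2 ⟨h1, h2⟩, by rw [habs2, habs]⟩
    have hcard : D.card = (S.erase a).card := by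
      apply Finset.card_bij (fun k _ => kp k)
      · intro k hk
        obtain ⟨hmem, hlt, _⟩ := hkpS k hk
        refine Finset.mem_erase.2 ⟨?_, hmem⟩
        have hak : a ≤ k := Finset.min'_le S k (hDsub hk)
        omega
      · intro k₁ h₁ k₂ h₂ heq
        by_contra hne
        wlog hlt : k₁ < k₂ generalizing k₁ k₂
        · exact this k₂ h₂ k₁ h₁ heq.symm (Ne.symm hne) (by omega)
        obtain ⟨_, hlt1, hmin1⟩ := hkpS k₁ h₁
        obtain ⟨_, hlt2, _⟩ := hkpS k₂ h₂
        obtain ⟨hk2m, habs2, _⟩ := hDmem k₂ h₂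
        obtain ⟨_, habs1, _⟩ := hDmem k₁ h₁
        exact hmin1 k₂ (hmemIset k₂ hk2m) hlt (by omega) (by rw [habs1, habs2])
      · intro l hl
        obtain ⟨hla, hlS⟩ := Finset.mem_erase.1 hl
        obtain ⟨hlm, habsl⟩ := hSmem l hlS
        set T := S.filter (· < l) with hT
        have haT : a ∈ T := by
          have h1 : a ∈ S := Finset.min'_mem S hSne
          have h2 : a ≤ l := Finset.min'_le S l hlS
          exact Finset.mem_filter.2 ⟨h1, lt_of_le_of_ne h2 (Ne.symm hla)⟩
        have hTne : T.Nonempty := ⟨a, haT⟩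
        set k := T.max' hTne with hk
        have hkT : k ∈ T := Finset.max'_mem T hTne
        obtain ⟨hkS, hkl⟩ := Finset.mem_filter.1 hkT
        have hkl : k < l := hkl
        obtain ⟨hkm, habsk⟩ := hSmem k hkS
        have hkpk : kp k = l := by
          rcases hkp k (hmemIset k hkm) with ⟨heq, hnone⟩ | ⟨hmem, hlt, habs2, hmin⟩
          · exact absurd (by rw [habsl, habsk])
              (hnone l (hmemIset l hlm) hkl)
          · by_contra hne
            rcases lt_trichotomy (kp k) l with h | h | h
            · -- kp k ∈ T, contradicting maximality of k
              have h1k : (1:ℤ) ≤ k := (Finset.mem_Icc.1 hkm).1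
              have hkpIcc : kp k ∈ Finset.Icc 1 (m : ℤ) := hIsetPos _ hmem (by omega)
              have hkpS' : kp k ∈ S := by
                simp only [hS, Finset.mem_filter]
                exact ⟨hkpIcc, by rw [habs2, habsk]⟩
              have : kp k ∈ T := Finset.mem_filter.2 ⟨hkpS', h⟩
              have := Finset.le_max' T (kp k) this
              omega
            · exact hne h
            · exact hmin l (hmemIset l hlm) hkl h (by rw [habsl, habsk])
        refine ⟨k, ?_, hkpk⟩
        simp only [hD, Finset.mem_filter]
        have := Finset.mem_Icc.1 hlm
        exact ⟨hkm, habsk, by omega, by omega⟩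
    rw [hcard, Finset.card_erase_of_mem (Finset.min'_mem S hSne)]
  · have hSempty : S = ∅ := Finset.not_nonempty_iff_eq_empty.1 hSne
    have : D = ∅ := Finset.subset_empty.1 (hSempty ▸ hDsub)
    rw [this, hSempty]
    simp
end

section
/- Let î be as in the BFZ construction with adjacent values r, p (a_{rp} < 0), and suppose u ends ...s_r...s_p... and v begins ...s_r...s_p..., giving indices k_1 < k_2 (from u, entries negative) with k_1⁺ = k_3, k_2⁺ = k_4 (from v, entries positive) and k_3 < k_4. Then neither inclined-edge condition holds for the pair (k_1, k_2): it is not the case that k_2 < k_1⁺ < k_2⁺ with ε(i_{k_2}) = ε(i_{k_1⁺}) producing an arrow, and the condition k_1 < k_2 < k_2⁺ < k_1⁺ fails since k_2⁺ = k_4 > k_3 = k_1⁺; hence b_{k_1 k_2} = 0 and the oppositely-oriented glued edges cancel in Q^{u,v}. -/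
/-- The sign `ε(x)`: `+1` if `x > 0` and `-1` otherwise (entries are nonzero). -/
def eps (x : ℤ) : ℤ := if 0 < x then 1 else -1

/-- The BFZ exchange matrix entry `b_{kl}`, where `p = max{k,l}`, `q = min{k⁺,l⁺}`. -/
def bmat (i : ℤ → ℤ) (a : ℕ → ℕ → ℤ) (kp : ℤ → ℤ) (k l : ℤ) : ℤ :=
  let p := max k l
  let q := min (kp k) (kp l)
  if p = q then -(k - l).sign * eps (i p)
  else if p < q ∧ 0 < (k - l) * (kp k - kp l) * eps (i p) * eps (i q) then
    -(k - l).sign * eps (i p) * a (i k).natAbs (i l).natAbs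
  else 0

/-- Gluing, cancelling edge case: `u = ...s_r...s_p...` and `v = ...s_r...s_p...` give indices
`k₁ < k₂` (entries from `u` negative) with `k₁⁺ = k₃`, `k₂⁺ = k₄` (entries from `v`
positive) and `k₂ < k₃ < k₄`, `a_{rp} < 0`. Then neither inclined-edge condition holds for
`(k₁, k₂)`: not (`k₂ < k₁⁺ < k₂⁺` with `ε(i_{k₂}) = ε(i_{k₁⁺})`), and
`k₁ < k₂ < k₂⁺ < k₁⁺` fails since `k₂⁺ = k₄ > k₃ = k₁⁺`; hence `b_{k₁k₂} = 0`. -/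
theorem stmt_19 (i : ℤ → ℤ) (a : ℕ → ℕ → ℤ) (kp : ℤ → ℤ)
    (r p : ℕ) (k₁ k₂ k₃ k₄ : ℤ)
    (h12 : k₁ < k₂) (h23 : k₂ < k₃) (h34 : k₃ < k₄)
    (hkp1 : kp k₁ = k₃) (hkp2 : kp k₂ = k₄)
    (hneg1 : i k₁ < 0) (hneg2 : i k₂ < 0) (hpos3 : 0 < i k₃) (hpos4 : 0 < i k₄)
    (habs1 : (i k₁).natAbs = r) (habs3 : (i k₃).natAbs = r)
    (habs2 : (i k₂).natAbs = p) (habs4 : (i k₄).natAbs = p)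
    (hadj : a r p < 0) :
    ¬(k₂ < kp k₁ ∧ kp k₁ < kp k₂ ∧ eps (i k₂) = eps (i (kp k₁))) ∧
    ¬(k₁ < k₂ ∧ k₂ < kp k₂ ∧ kp k₂ < kp k₁) ∧
    bmat i a kp k₁ k₂ = 0 := by

  refine ⟨?_, ?_, ?_⟩
  · rintro ⟨-, -, h⟩
    rw [hkp1] at h
    simp [eps, hpos3, not_lt.2 hneg2.le] at h
  · rintro ⟨-, -, h⟩
    rw [hkp1, hkp2] at h
    omega
  · unfold bmat
    rw [hkp1, hkp2]
    have hmax : max k₁ k₂ = k₂ := max_eq_right h12.le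
    have hmin : min k₃ k₄ = k₃ := min_eq_left h34.le
    rw [hmax, hmin]
    have h1 : k₂ ≠ k₃ := h23.ne
    have h2 : ¬ (0 < (k₁ - k₂) * (k₃ - k₄) * eps (i k₂) * eps (i k₃)) := by
      simp only [eps, hpos3, if_pos, not_lt.2 hneg2.le, if_neg, not_false_iff]
      have := mul_pos (by omega : (0:ℤ) < k₂ - k₁) (by omega : (0:ℤ) < k₄ - k₃)
      nlinarith
    simp [h1, h2]
end
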